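/- arXiv:1908.07803 — 4 statements merged into one kernel-verified Lean document; each statement's English description precedes it below -/
import Mathlib

section
/- Let L be a real N×N matrix with zero row sums (L·𝟏 = 0, where 𝟏 is the all-ones vector) and nonpositive off-diagonal entries (L_{ij} ≤ 0 for all i ≠ j), and let r ∈ ℝ^N be an entrywise positive vector with rᵀL = 0. Set R = diag(r₁,…,r_N) and L̂ = RL + LᵀR. Then L̂ is symmetric, satisfies L̂·𝟏 = 0, has nonpositive off-diagonal entries, and is positive semidefinite. -/
/-!
Entrywise, `L̂ i j = r i * L i j + L j i * r j`, so symmetry and the sign of the off-diagonal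
entries are immediate, and `L̂ 𝟏 = R (L 𝟏) + Lᵀ r = 0` uses both null vectors of `L`. A symmetric
matrix `A` with zero row sums satisfies `2 xᵀ A x = ∑ i j, (-A i j) (x i - x j)²`, which is
nonnegative once the off-diagonal entries are nonpositive.
-/

open Matrix

namespace Matrix

variable {ι R : Type*} [Fintype ι]

section CommRing

variable [CommRing R]

lemma diagonal_mul_add_transpose_mul_diagonal_apply [DecidableEq ι] (r : ι → R)
    (L : Matrix ι ι R) (i j : ι) :
    (diagonal r * L + Lᵀ * diagonal r) i j = r i * L i j + L j i * r j := by
  simp [diagonal_mul, mul_diagonal]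

lemma isSymm_diagonal_mul_add_transpose_mul_diagonal [DecidableEq ι] (r : ι → R)
    (L : Matrix ι ι R) : (diagonal r * L + Lᵀ * diagonal r).IsSymm := by
  simp only [IsSymm, transpose_add, transpose_mul, diagonal_transpose, transpose_transpose,
    add_comm]

lemma diagonal_mul_add_transpose_mul_diagonal_mulVec_one [DecidableEq ι] {r : ι → R}
    {L : Matrix ι ι R} (hrow : L *ᵥ 1 = 0) (hleft : r ᵥ* L = 0) :
    (diagonal r * L + Lᵀ * diagonal r) *ᵥ 1 = 0 := by
  have hr : diagonal r *ᵥ 1 = r := by ext i; simp [mulVec_diagonal]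
  rw [add_mulVec, ← mulVec_mulVec, ← mulVec_mulVec, hrow, hr, mulVec_transpose, hleft,
    mulVec_zero, add_zero]

lemma sum_mul_sub_sq_eq_of_mulVec_one_eq_zero {A : Matrix ι ι R} (hrow : A *ᵥ 1 = 0)
    (hcol : 1 ᵥ* A = 0) (x : ι → R) :
    ∑ i, ∑ j, A i j * (x i - x j) ^ 2 = -2 * (x ⬝ᵥ A *ᵥ x) := by
  have hrow' : ∀ i, ∑ j, A i j = 0 := fun i => by
    simpa [mulVec, dotProduct] using congrFun hrow i
  have hcol' : ∀ j, ∑ i, A i j = 0 := fun j => by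
    simpa [vecMul, dotProduct] using congrFun hcol j
  have hx_i : ∑ i, ∑ j, A i j * x i ^ 2 = 0 := by
    simp [← Finset.sum_mul, hrow']
  have hx_j : ∑ i, ∑ j, A i j * x j ^ 2 = 0 := by
    rw [Finset.sum_comm]; simp [← Finset.sum_mul, hcol']
  have hcross : x ⬝ᵥ A *ᵥ x = ∑ i, ∑ j, A i j * x i * x j := by
    simp only [dotProduct, mulVec, Finset.mul_sum]
    exact Finset.sum_congr rfl fun i _ => Finset.sum_congr rfl fun j _ => by ring
  have hexpand : ∀ i j, A i j * (x i - x j) ^ 2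
      = A i j * x i ^ 2 + A i j * x j ^ 2 - 2 * (A i j * x i * x j) := fun i j => by ring
  simp only [hexpand, Finset.sum_sub_distrib, Finset.sum_add_distrib, ← Finset.mul_sum, hx_i,
    hx_j, hcross]
  ring

end CommRing

lemma posSemidef_of_mulVec_one_eq_zero_of_offDiag_nonpos [CommRing R] [LinearOrder R]
    [IsStrictOrderedRing R] [StarRing R] [TrivialStar R] {A : Matrix ι ι R} (hA : A.IsSymm)
    (hrow : A *ᵥ 1 = 0) (hoff : ∀ i j, i ≠ j → A i j ≤ 0) : A.PosSemidef := by
  refine PosSemidef.of_dotProduct_mulVec_nonneg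
    (by rw [IsHermitian, conjTranspose_eq_transpose_of_trivial]; exact hA) fun x => ?_
  have hcol : 1 ᵥ* A = 0 := by rw [← mulVec_transpose, hA, hrow]
  have hsum : 0 ≤ -∑ i, ∑ j, A i j * (x i - x j) ^ 2 := by
    rw [← Finset.sum_neg_distrib]
    refine Finset.sum_nonneg fun i _ => ?_
    rw [← Finset.sum_neg_distrib]
    refine Finset.sum_nonneg fun j _ => ?_
    rcases eq_or_ne i j with rfl | hij
    · simp
    · exact neg_nonneg.mpr (mul_nonpos_of_nonpos_of_nonneg (hoff i j hij) (sq_nonneg _))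
  rw [sum_mul_sub_sq_eq_of_mulVec_one_eq_zero hrow hcol] at hsum
  rw [star_trivial]
  linarith

end Matrix

theorem stmt_0_general {N : ℕ} (L : Matrix (Fin N) (Fin N) ℝ)
    (hrow : L.mulVec (1 : Fin N → ℝ) = 0)
    (hoff : ∀ i j : Fin N, i ≠ j → L i j ≤ 0)
    (r : Fin N → ℝ) (hr : ∀ i, 0 < r i)
    (hleft : Matrix.vecMul r L = 0) :
    (Matrix.diagonal r * L + Lᵀ * Matrix.diagonal r).IsSymm ∧
    (Matrix.diagonal r * L + Lᵀ * Matrix.diagonal r).mulVec (1 : Fin N → ℝ) = 0 ∧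
    (∀ i j : Fin N, i ≠ j → (Matrix.diagonal r * L + Lᵀ * Matrix.diagonal r) i j ≤ 0) ∧
    (Matrix.diagonal r * L + Lᵀ * Matrix.diagonal r).PosSemidef := by
  have hsymm := isSymm_diagonal_mul_add_transpose_mul_diagonal r L
  have hone := diagonal_mul_add_transpose_mul_diagonal_mulVec_one hrow hleft
  have hoffL : ∀ i j : Fin N, i ≠ j →
      (Matrix.diagonal r * L + Lᵀ * Matrix.diagonal r) i j ≤ 0 := fun i j hij => by
    rw [diagonal_mul_add_transpose_mul_diagonal_apply]
    have := mul_nonpos_of_nonneg_of_nonpos (hr i).le (hoff i j hij)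
    have := mul_nonpos_of_nonpos_of_nonneg (hoff j i hij.symm) (hr j).le
    linarith
  exact ⟨hsymm, hone, hoffL, posSemidef_of_mulVec_one_eq_zero_of_offDiag_nonpos hsymm hone hoffL⟩

/-- Structural part of Lemma 2: if `L` has zero row sums, nonpositive off-diagonal
entries, and `r` is a positive left null vector of `L`, then with `R = diag r`,
the matrix `L̂ = R L + Lᵀ R` is symmetric, has zero row sums, nonpositive
off-diagonal entries, and is positive semidefinite. -/
theorem stmt_0 {N : ℕ} (hN : 1 ≤ N) (L : Matrix (Fin N) (Fin N) ℝ)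
    (hrow : L.mulVec (1 : Fin N → ℝ) = 0)
    (hoff : ∀ i j : Fin N, i ≠ j → L i j ≤ 0)
    (r : Fin N → ℝ) (hr : ∀ i, 0 < r i)
    (hleft : Matrix.vecMul r L = 0) :
    (Matrix.diagonal r * L + Lᵀ * Matrix.diagonal r).IsSymm ∧
    (Matrix.diagonal r * L + Lᵀ * Matrix.diagonal r).mulVec (1 : Fin N → ℝ) = 0 ∧
    (∀ i j : Fin N, i ≠ j → (Matrix.diagonal r * L + Lᵀ * Matrix.diagonal r) i j ≤ 0) ∧
    (Matrix.diagonal r * L + Lᵀ * Matrix.diagonal r).PosSemidef :=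
  stmt_0_general L hrow hoff r hr hleft
end

section
/- Let N ≥ 2 and let L̂ be a real symmetric positive semidefinite N×N matrix with L̂·𝟏 = 0 whose zero eigenvalue is simple (its kernel is exactly the span of 𝟏), and let λ₂(L̂) > 0 denote its second-smallest eigenvalue. Then for every entrywise positive vector ς ∈ ℝ^N and every nonzero υ ∈ ℝ^N with υᵀς = 0, one has υᵀL̂υ / (υᵀυ) > λ₂(L̂)/N. -/
/-!
The projection `x = υ - (∑ υ / N) 𝟏` of `υ` onto `𝟏⊥` has the same quadratic form as `υ`,
because `L̂` is symmetric and kills `𝟏`, so `λ₂ ‖x‖² ≤ υᵀ L̂ υ`; and `N ‖x‖² = N ‖υ‖² - (∑ υ)²`.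
Since `υ ⊥ ς` with `ς > 0`, `υ` has entries of both signs, so some `υⱼ ≠ 0` has the sign
opposite to `∑ υ`. Dropping it increases `|∑ υ|`, and Cauchy–Schwarz on the remaining `N - 1`
entries gives `(∑ υ)² < (N - 1) ‖υ‖²`, i.e. `N ‖x‖² > ‖υ‖²`.
-/

open Matrix Finset

lemma dotProduct_mulVec_sub_of_mulVec_eq_zero {ι R : Type*} [Fintype ι] [CommRing R]
    {L : Matrix ι ι R} (hL : L.IsSymm) {v w : ι → R} (hw : L *ᵥ w = 0) :
    (v - w) ⬝ᵥ L *ᵥ (v - w) = v ⬝ᵥ L *ᵥ v := by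
  have hwL : w ⬝ᵥ L *ᵥ v = 0 := by
    rw [dotProduct_mulVec, ← hL.eq, vecMul_transpose, hw, zero_dotProduct]
  rw [mulVec_sub, hw, sub_zero, sub_dotProduct, hwL, sub_zero]

variable {ι : Type*} [Fintype ι] {v w : ι → ℝ}

lemma exists_neg_of_dotProduct_eq_zero (hw : ∀ i, 0 < w i) (hv : v ≠ 0) (hvw : v ⬝ᵥ w = 0) :
    ∃ i, v i < 0 := by
  by_contra! hnonneg
  refine hv (funext fun i => ?_)
  have hvwi := (sum_eq_zero_iff_of_nonneg fun i _ => mul_nonneg (hnonneg i) (hw i).le).1 hvw i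
    (mem_univ i)
  exact (mul_eq_zero.1 hvwi).resolve_right (hw i).ne'

lemma exists_pos_of_dotProduct_eq_zero (hw : ∀ i, 0 < w i) (hv : v ≠ 0) (hvw : v ⬝ᵥ w = 0) :
    ∃ i, 0 < v i := by
  obtain ⟨i, hi⟩ := exists_neg_of_dotProduct_eq_zero hw (neg_ne_zero.2 hv)
    (by rw [neg_dotProduct, hvw, neg_zero])
  exact ⟨i, neg_neg_iff_pos.1 hi⟩

lemma exists_ne_zero_mul_sum_nonpos (hw : ∀ i, 0 < w i) (hv : v ≠ 0) (hvw : v ⬝ᵥ w = 0) :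
    ∃ j, v j ≠ 0 ∧ v j * ∑ i, v i ≤ 0 := by
  rcases le_or_gt 0 (∑ i, v i) with hS | hS
  · obtain ⟨j, hj⟩ := exists_neg_of_dotProduct_eq_zero hw hv hvw
    exact ⟨j, hj.ne, mul_nonpos_of_nonpos_of_nonneg hj.le hS⟩
  · obtain ⟨j, hj⟩ := exists_pos_of_dotProduct_eq_zero hw hv hvw
    exact ⟨j, hj.ne', mul_nonpos_of_nonneg_of_nonpos hj.le hS.le⟩

lemma sq_sum_add_sum_sq_lt_card_mul {j : ι} (hj : v j ≠ 0)
    (hjS : v j * ∑ i, v i ≤ 0) :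
    (∑ i, v i) ^ 2 + ∑ i, v i ^ 2 < Fintype.card ι * ∑ i, v i ^ 2 := by
  classical
  set M : ℝ := ↑(#(univ.erase j))
  have hcard : (Fintype.card ι : ℝ) = M + 1 := by
    rw [← card_univ, ← card_erase_add_one (mem_univ j), Nat.cast_succ]
  have hsum : ∑ i, v i = ∑ i ∈ univ.erase j, v i + v j :=
    (sum_erase_add _ _ (mem_univ j)).symm
  have hsum_sq : ∑ i, v i ^ 2 = ∑ i ∈ univ.erase j, v i ^ 2 + v j ^ 2 :=
    (sum_erase_add _ _ (mem_univ j)).symm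
  have hdrop : (∑ i, v i) ^ 2 < (∑ i ∈ univ.erase j, v i) ^ 2 := by
    have : 0 < v j ^ 2 := by positivity
    rw [hsum] at hjS ⊢
    nlinarith
  have hCS := sq_sum_le_card_mul_sum_sq (s := univ.erase j) (f := v)
  have : 0 ≤ M * v j ^ 2 := by positivity
  rw [hcard, hsum_sq]
  linarith

noncomputable def centre (v : ι → ℝ) : ι → ℝ := v - ((∑ i, v i) / Fintype.card ι) • 1

lemma centre_dotProduct_one (v : ι → ℝ) : centre v ⬝ᵥ 1 = 0 := by
  rcases isEmpty_or_nonempty ι with hι | hι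
  · simp [dotProduct]
  · have : (Fintype.card ι : ℝ) ≠ 0 := Nat.cast_ne_zero.2 Fintype.card_ne_zero
    rw [centre, sub_dotProduct, smul_dotProduct, dotProduct_one, dotProduct_one]
    simp only [Pi.one_apply, sum_const, card_univ, nsmul_eq_mul, mul_one, smul_eq_mul]
    field_simp
    ring

lemma card_mul_centre_dotProduct_self (v : ι → ℝ) :
    Fintype.card ι * (centre v ⬝ᵥ centre v) =
      Fintype.card ι * (v ⬝ᵥ v) - (∑ i, v i) ^ 2 := by
  rcases isEmpty_or_nonempty ι with hι | hι
  · simp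
  · have : (Fintype.card ι : ℝ) ≠ 0 := Nat.cast_ne_zero.2 Fintype.card_ne_zero
    simp only [centre, sub_dotProduct, dotProduct_sub, smul_dotProduct, dotProduct_smul,
      one_dotProduct, dotProduct_comm 1 v]
    simp only [dotProduct_one, Pi.one_apply, sum_const, card_univ, nsmul_eq_mul, mul_one,
      smul_eq_mul]
    field_simp
    ring

lemma dotProduct_self_lt_card_mul_centre (hw : ∀ i, 0 < w i) (hv : v ≠ 0)
    (hvw : v ⬝ᵥ w = 0) : v ⬝ᵥ v < Fintype.card ι * (centre v ⬝ᵥ centre v) := by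
  obtain ⟨j, hj, hjS⟩ := exists_ne_zero_mul_sum_nonpos hw hv hvw
  have hsq : v ⬝ᵥ v = ∑ i, v i ^ 2 := by simp only [dotProduct, sq]
  have hCS := sq_sum_add_sum_sq_lt_card_mul hj hjS
  rw [← hsq] at hCS
  rw [card_mul_centre_dotProduct_self]
  linarith

theorem stmt_1_general {N : ℕ} (Lhat : Matrix (Fin N) (Fin N) ℝ)
    (hsym : Lhat.IsSymm)
    (hrow : Lhat.mulVec (1 : Fin N → ℝ) = 0)
    (lam2 : ℝ) (hlam2pos : 0 < lam2)
    (hlam2 : IsGreatest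
      {c : ℝ | ∀ x : Fin N → ℝ, x ⬝ᵥ (1 : Fin N → ℝ) = 0 →
        c * (x ⬝ᵥ x) ≤ x ⬝ᵥ Lhat.mulVec x} lam2) :
    ∀ ς : Fin N → ℝ, (∀ i, 0 < ς i) →
      ∀ υ : Fin N → ℝ, υ ≠ 0 → υ ⬝ᵥ ς = 0 →
        lam2 / N < (υ ⬝ᵥ Lhat.mulVec υ) / (υ ⬝ᵥ υ) := by
  intro ς hς υ hυ hperp
  obtain ⟨i, -⟩ := Function.ne_iff.1 hυ
  have hNpos : (0 : ℝ) < N := Nat.cast_pos.2 i.pos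
  have hυυ : 0 < υ ⬝ᵥ υ :=
    (sum_nonneg fun i _ => mul_self_nonneg (υ i)).lt_of_ne
      (Ne.symm (dotProduct_self_eq_zero.not.2 hυ))
  have hcentre : υ ⬝ᵥ υ < N * (centre υ ⬝ᵥ centre υ) := by
    simpa only [Fintype.card_fin] using dotProduct_self_lt_card_mul_centre hς hυ hperp
  have hquad : centre υ ⬝ᵥ Lhat *ᵥ centre υ = υ ⬝ᵥ Lhat *ᵥ υ :=
    dotProduct_mulVec_sub_of_mulVec_eq_zero hsym (by rw [mulVec_smul, hrow, smul_zero])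
  have hlow : lam2 * (centre υ ⬝ᵥ centre υ) ≤ υ ⬝ᵥ Lhat *ᵥ υ :=
    hquad ▸ hlam2.1 (centre υ) (centre_dotProduct_one υ)
  rw [div_lt_div_iff₀ hNpos hυυ]
  calc lam2 * (υ ⬝ᵥ υ) < lam2 * (N * (centre υ ⬝ᵥ centre υ)) := by gcongr
    _ = N * (lam2 * (centre υ ⬝ᵥ centre υ)) := by ring
    _ ≤ N * (υ ⬝ᵥ Lhat *ᵥ υ) := by gcongr
    _ = (υ ⬝ᵥ Lhat *ᵥ υ) * N := mul_comm _ _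

/-- Lemma 2, inequality (10): for a symmetric PSD matrix `L̂` with `L̂·𝟏 = 0` whose
kernel is exactly the span of `𝟏`, with `λ₂` its second-smallest eigenvalue
(characterized variationally as the greatest constant `c` with
`c·‖x‖² ≤ xᵀ L̂ x` for all `x ⊥ 𝟏`), every nonzero `υ` orthogonal to a positive
vector `ς` satisfies `υᵀL̂υ/(υᵀυ) > λ₂/N`. -/
theorem stmt_1 {N : ℕ} (hN : 2 ≤ N) (Lhat : Matrix (Fin N) (Fin N) ℝ)
    (hsym : Lhat.IsSymm) (hpsd : Lhat.PosSemidef)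
    (hrow : Lhat.mulVec (1 : Fin N → ℝ) = 0)
    (hker : ∀ x : Fin N → ℝ, Lhat.mulVec x = 0 → ∃ a : ℝ, x = fun _ => a)
    (lam2 : ℝ) (hlam2pos : 0 < lam2)
    (hlam2 : IsGreatest
      {c : ℝ | ∀ x : Fin N → ℝ, x ⬝ᵥ (1 : Fin N → ℝ) = 0 →
        c * (x ⬝ᵥ x) ≤ x ⬝ᵥ Lhat.mulVec x} lam2) :
    ∀ ς : Fin N → ℝ, (∀ i, 0 < ς i) →
      ∀ υ : Fin N → ℝ, υ ≠ 0 → υ ⬝ᵥ ς = 0 →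
        lam2 / N < (υ ⬝ᵥ Lhat.mulVec υ) / (υ ⬝ᵥ υ) :=
  stmt_1_general Lhat hsym hrow lam2 hlam2pos hlam2
end

section
/- Let N ≥ 2, let L be a real N×N matrix with L·𝟏 = 0, let r ∈ ℝ^N, W a real (N−1)×N matrix and U a real N×(N−1) matrix satisfying 𝟏rᵀ + UW = I_N, and suppose 𝒥 := W L U is invertible. Then I_N − 𝟏rᵀ = U·𝒥⁻¹·W·L. -/
open Matrix

/-!
Since `UW = I − 𝟏rᵀ` and `L𝟏 = 0`, we get `WL = WL(𝟏rᵀ + UW) = 𝒥W`; hence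
`U𝒥⁻¹WL = UW = I − 𝟏rᵀ`.
-/

namespace Matrix

variable {m n R : Type*} [Fintype m] [Fintype n] [DecidableEq n] [CommRing R]

theorem mul_eq_mul_mul_mul_of_add_mul_eq_one {P L : Matrix n n R} {W : Matrix m n R}
    {U : Matrix n m R} (h : P + U * W = 1) (hLP : L * P = 0) :
    W * L = W * L * U * W :=
  calc W * L = W * L * (P + U * W) := by rw [h, Matrix.mul_one]
    _ = W * (L * P) + W * L * U * W := by
      rw [Matrix.mul_add, Matrix.mul_assoc W L P, Matrix.mul_assoc (W * L) U W]
    _ = W * L * U * W := by rw [hLP, Matrix.mul_zero, zero_add]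

theorem one_sub_eq_mul_inv_mul_mul_of_add_mul_eq_one [DecidableEq m] {P L : Matrix n n R}
    {W : Matrix m n R} {U : Matrix n m R} (h : P + U * W = 1) (hLP : L * P = 0)
    (hJ : IsUnit (W * L * U)) :
    1 - P = U * (W * L * U)⁻¹ * W * L := by
  have hinv : (W * L * U)⁻¹ * (W * L * U) = 1 :=
    nonsing_inv_mul _ ((isUnit_iff_isUnit_det _).mp hJ)
  calc 1 - P = U * W := by rw [← h]; abel
    _ = U * ((W * L * U)⁻¹ * (W * L * U) * W) := by rw [hinv, Matrix.one_mul]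
    _ = U * (W * L * U)⁻¹ * W * L := by
      rw [Matrix.mul_assoc _ _ W, ← mul_eq_mul_mul_mul_of_add_mul_eq_one h hLP]
      simp only [Matrix.mul_assoc]

end Matrix

theorem stmt_10_general {N : ℕ} (L : Matrix (Fin N) (Fin N) ℝ)
    (hL : L.mulVec (1 : Fin N → ℝ) = 0) (r : Fin N → ℝ)
    (W : Matrix (Fin (N - 1)) (Fin N) ℝ) (U : Matrix (Fin N) (Fin (N - 1)) ℝ)
    (h : Matrix.vecMulVec (1 : Fin N → ℝ) r + U * W = 1)
    (hJ : IsUnit (W * L * U)) :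
    (1 : Matrix (Fin N) (Fin N) ℝ) - Matrix.vecMulVec (1 : Fin N → ℝ) r =
      U * (W * L * U)⁻¹ * W * L := by
  have hLP : L * vecMulVec 1 r = 0 := by rw [mul_vecMulVec, hL, zero_vecMulVec]
  exact one_sub_eq_mul_inv_mul_mul_of_add_mul_eq_one h hLP hJ

/-- Identity `I − 𝟏rᵀ = U 𝒥⁻¹ W L` (with `𝒥 = WLU` invertible) from the proof
of Theorem 2, where `L·𝟏 = 0` and `𝟏rᵀ + UW = I`. -/
theorem stmt_10 {N : ℕ} (hN : 2 ≤ N) (L : Matrix (Fin N) (Fin N) ℝ)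
    (hL : L.mulVec (1 : Fin N → ℝ) = 0) (r : Fin N → ℝ)
    (W : Matrix (Fin (N - 1)) (Fin N) ℝ) (U : Matrix (Fin N) (Fin (N - 1)) ℝ)
    (h : Matrix.vecMulVec (1 : Fin N → ℝ) r + U * W = 1)
    (hJ : IsUnit (W * L * U)) :
    (1 : Matrix (Fin N) (Fin N) ℝ) - Matrix.vecMulVec (1 : Fin N → ℝ) r =
      U * (W * L * U)⁻¹ * W * L :=
  stmt_10_general L hL r W U h hJ
end

section
/- Let Q ≥ 0 and 0 < c < 1 be constants, and let z : (0,∞) → ℝ satisfy 0 ≤ z(t) ≤ Q for all t > 0. Let β : (0,∞) → ℝ be nonincreasing with β(t) → 0 as t → ∞, and let m : (0,∞) → ℝ be nonnegative and nonincreasing with m(t) → m_∞ as t → ∞. Suppose that for every t > 0, z(t) ≤ max{ β(t/4), c·z(t/2), m(t/4) }. Then for every δ > 0 there exists T > 0 such that z(t) ≤ m_∞ + δ for all t > T; in particular limsup_{t→∞} z(t) ≤ m_∞. -/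
/-!
Fix `δ > 0`. For large `t` the terms `β(t/4)` and `m(t/4)` lie below `B = m_∞ + δ`, so the
recursion reads `z(t) ≤ max{B, c·z(t/2)}`. Since `m ≥ 0` forces `B ≥ 0`, hence `c·B ≤ B`,
iterating it `n` times from the a priori bound `z ≤ Q` gives `z(t) ≤ max{B, cⁿ·Q}` for
`t > 2ⁿ·T`, and `cⁿ·Q < B` once `n` is large.
-/

open Filter Set

section HalvingRecursion

variable {z : ℝ → ℝ} {B c Q T : ℝ}

theorem le_max_pow_mul_of_le_max_mul_half (hc0 : 0 ≤ c) (hc1 : c ≤ 1) (hB : 0 ≤ B)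
    (hT : 0 ≤ T) (hQ : ∀ t, T < t → z t ≤ Q)
    (hrec : ∀ t, T < t → z t ≤ max B (c * z (t / 2))) :
    ∀ n : ℕ, ∀ t, 2 ^ n * T < t → z t ≤ max B (c ^ n * Q) := by
  intro n
  induction n with
  | zero => simpa using fun t ht => le_max_of_le_right (hQ t ht)
  | succ n ih =>
    intro t ht
    have hTt : T < t := by
      have : T ≤ 2 ^ (n + 1) * T := le_mul_of_one_le_left hT (one_le_pow₀ one_le_two)
      linarith
    have hhalf : z (t / 2) ≤ max B (c ^ n * Q) := ih (t / 2) (by rw [pow_succ] at ht; linarith)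
    calc z t ≤ max B (c * z (t / 2)) := hrec t hTt
      _ ≤ max B (c * max B (c ^ n * Q)) := by gcongr
      _ = max B (max (c * B) (c ^ (n + 1) * Q)) := by
        rw [mul_max_of_nonneg _ _ hc0, pow_succ', mul_assoc]
      _ = max B (c ^ (n + 1) * Q) := by
        rw [← max_assoc, max_eq_left (mul_le_of_le_one_left hB hc1)]

theorem eventually_le_of_le_max_mul_half (hc0 : 0 ≤ c) (hc1 : c < 1) (hB : 0 < B)
    (hQ : ∀ᶠ t in atTop, z t ≤ Q) (hrec : ∀ᶠ t in atTop, z t ≤ max B (c * z (t / 2))) :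
    ∀ᶠ t in atTop, z t ≤ B := by
  obtain ⟨T₀, hT₀⟩ := (hQ.and hrec).exists_forall_of_atTop
  set T := max T₀ 0
  have hT : ∀ t, T < t → z t ≤ Q ∧ z t ≤ max B (c * z (t / 2)) :=
    fun t ht => hT₀ t ((le_max_left _ _).trans ht.le)
  have hpow : Tendsto (fun n : ℕ => c ^ n * Q) atTop (nhds 0) := by
    simpa using (tendsto_pow_atTop_nhds_zero_of_lt_one hc0 hc1).mul_const Q
  obtain ⟨n, hn⟩ := (hpow.eventually (gt_mem_nhds hB)).exists
  filter_upwards [eventually_gt_atTop (2 ^ n * T)] with t ht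
  have := le_max_pow_mul_of_le_max_mul_half hc0 hc1.le hB.le (le_max_right _ _)
    (fun t ht => (hT t ht).1) (fun t ht => (hT t ht).2) n t ht
  exact this.trans (max_le le_rfl hn.le)

end HalvingRecursion

theorem limsup_le_of_forall_pos_eventually_le_add {α : Type*} {l : Filter α} [l.NeBot]
    {f : α → ℝ} {a b : ℝ} (hbdd : ∀ᶠ t in l, b ≤ f t) (h : ∀ δ, 0 < δ → ∀ᶠ t in l, f t ≤ a + δ) :
    limsup f l ≤ a := by
  have hcobdd : IsCoboundedUnder (· ≤ ·) l f :=
    (isBoundedUnder_of_eventually_ge hbdd).isCoboundedUnder_le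
  exact le_of_forall_pos_le_add fun δ hδ => limsup_le_of_le hcobdd (h δ hδ)

theorem stmt_15_general (Q c : ℝ) (hc0 : 0 < c) (hc1 : c < 1)
    (z β m : ℝ → ℝ) (hz : ∀ t : ℝ, 0 < t → 0 ≤ z t ∧ z t ≤ Q)
    (hβ : Tendsto β atTop (nhds 0))
    (hm0 : ∀ t : ℝ, 0 < t → 0 ≤ m t)
    (minf : ℝ) (hminf : Tendsto m atTop (nhds minf))
    (h : ∀ t : ℝ, 0 < t →
      z t ≤ max (max (β (t / 4)) (c * z (t / 2))) (m (t / 4))) :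
    (∀ δ : ℝ, 0 < δ → ∃ T : ℝ, 0 < T ∧ ∀ t : ℝ, T < t → z t ≤ minf + δ) ∧
      limsup z atTop ≤ minf := by
  have hpos : ∀ᶠ t : ℝ in atTop, 0 < t := eventually_gt_atTop 0
  have hminf0 : 0 ≤ minf := ge_of_tendsto hminf (hpos.mono hm0)
  have hquarter : Tendsto (fun t : ℝ => t / 4) atTop atTop := tendsto_id.atTop_div_const four_pos
  have hev : ∀ δ, 0 < δ → ∀ᶠ t in atTop, z t ≤ minf + δ := by
    intro δ hδ
    have hβδ := hquarter.eventually (hβ.eventually (gt_mem_nhds hδ))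
    have hmδ :=
      hquarter.eventually (hminf.eventually (gt_mem_nhds (lt_add_of_pos_right minf hδ)))
    refine eventually_le_of_le_max_mul_half hc0.le hc1 (by positivity)
      (hpos.mono fun t ht => (hz t ht).2) ?_
    filter_upwards [hpos, hβδ, hmδ] with t ht hβt hmt
    refine (h t ht).trans (max_le (max_le ?_ (le_max_right _ _)) (le_max_of_le_left hmt.le))
    exact le_max_of_le_left (by linarith)
  refine ⟨fun δ hδ => ?_,
    limsup_le_of_forall_pos_eventually_le_add (hpos.mono fun t ht => (hz t ht).1) hev⟩
  obtain ⟨a, ha⟩ := eventually_atTop.1 (hev δ hδ)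
  exact ⟨max a 1, by positivity, fun t ht => ha t ((le_max_left _ _).trans ht.le)⟩

/-- Iterative contradiction argument (43)–(44) in the proof of Theorem 3: if
`0 ≤ z(t) ≤ Q` and `z(t) ≤ max{β(t/4), c·z(t/2), m(t/4)}` with `c < 1`, `β`
nonincreasing tending to `0`, and `m` nonnegative nonincreasing tending to
`m_∞`, then `z(t) ≤ m_∞ + δ` for all large `t`, and `limsup z ≤ m_∞`. -/
theorem stmt_15 (Q c : ℝ) (hQ : 0 ≤ Q) (hc0 : 0 < c) (hc1 : c < 1)
    (z β m : ℝ → ℝ) (hz : ∀ t : ℝ, 0 < t → 0 ≤ z t ∧ z t ≤ Q)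
    (hβmono : AntitoneOn β (Ioi 0)) (hβ : Tendsto β atTop (nhds 0))
    (hm0 : ∀ t : ℝ, 0 < t → 0 ≤ m t) (hmmono : AntitoneOn m (Ioi 0))
    (minf : ℝ) (hminf : Tendsto m atTop (nhds minf))
    (h : ∀ t : ℝ, 0 < t →
      z t ≤ max (max (β (t / 4)) (c * z (t / 2))) (m (t / 4))) :
    (∀ δ : ℝ, 0 < δ → ∃ T : ℝ, 0 < T ∧ ∀ t : ℝ, T < t → z t ≤ minf + δ) ∧
      limsup z atTop ≤ minf :=
  stmt_15_general Q c hc0 hc1 z β m hz hβ hm0 minf hminf h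
end
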